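/- arXiv:2405.16490 — 2 statements merged into one kernel-verified Lean document; each statement's English description precedes it below -/
import Mathlib

section
/- If a non-deterministic policy π is optimal for a teleo-environment ε, then there exist at least two distinct deterministic policies that are also optimal for ε. In particular, a non-deterministic policy is never uniquely optimal. -/
open scoped ENNReal BigOperators

structure Transducer (I O : Type) [Fintype O] where
  State : Type
  init : State
  out : State → O → ℝ≥0∞
  out_sum : ∀ st, ∑ o, out st o = 1
  step : State → I → O → State

namespace Transducer

variable {I O : Type} [Fintype O]

/-- The transducer evolved by a single input-output pair. -/
def evolve (t : Transducer I O) (i : I) (o : O) : Transducer I O :=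
  { t with init := t.step t.init i o }

def stepSeq (t : Transducer I O) : t.State → List (I × O) → t.State
  | st, [] => st
  | st, p :: rest => t.stepSeq (t.step st p.1 p.2) rest

/-- The transducer evolved along a finite sequence of input-output pairs. -/
def evolveSeq (t : Transducer I O) (l : List (I × O)) : Transducer I O :=
  { t with init := t.stepSeq t.init l }

/-- Induced behaviour: conditional probability of an output sequence given an
input sequence of the same length. -/
noncomputable def beh : Transducer I O → List I → List O → ℝ≥0∞
  | _, [], [] => 1
  | t, i :: is, o :: os => t.out t.init o * beh (t.evolve i o) is os
  | _, _, _ => 0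

/-- Behavioural equality of transducers. -/
def BehEq (t u : Transducer I O) : Prop :=
  ∀ is os, t.beh is os = u.beh is os

/-- States reachable from the initial state along possible transitions. -/
inductive Reachable (t : Transducer I O) : t.State → Prop
  | init : Reachable t t.init
  | step {st : t.State} (i : I) (o : O) :
      Reachable t st → t.out st o ≠ 0 → Reachable t (t.step st i o)

/-- A transducer is deterministic if every reachable output distribution is a
point mass. -/
def Deterministic (t : Transducer I O) : Prop :=
  ∀ st, t.Reachable st → ∃ o, t.out st o = 1

end Transducer

/-- A policy: a transducer from sensor values to actions. -/
abbrev Policy (S A : Type) [Fintype A] := Transducer S A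

/-- A teleo-environment: a transducer from actions to pairs of a sensor value
and a success signal (`true` = success ⊤, `false` = ⊥). -/
abbrev Env (S A : Type) [Fintype S] := Transducer A (S × Bool)

section Value

variable {S A : Type} [Fintype S] [Fintype A]

/-- Probability that success occurs at least once within the first `n` steps of
the coupled process of a policy and a teleo-environment. -/
noncomputable def succProb : ℕ → Policy S A → Env S A → ℝ≥0∞
  | 0, _, _ => 0
  | n + 1, π, ε =>
      ∑ a : A, ∑ p : S × Bool,
        π.out π.init a * ε.out ε.init p *
          (if p.2 then 1 else succProb n (π.evolve p.1 a) (ε.evolve a p))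

/-- The value of a policy in a teleo-environment: the probability that success
occurs at least once in the coupled process. -/
noncomputable def value (π : Policy S A) (ε : Env S A) : ℝ≥0∞ :=
  ⨆ n, succProb n π ε

/-- A policy is optimal for a teleo-environment if its value is maximal among
all policies. -/
def Optimal (π : Policy S A) (ε : Env S A) : Prop :=
  ∀ π' : Policy S A, value π' ε ≤ value π ε

/-- A policy is uniquely optimal if it is optimal and every optimal policy is
behaviourally equal to it. -/
def UniquelyOptimal (π : Policy S A) (ε : Env S A) : Prop :=
  Optimal π ε ∧ ∀ π' : Policy S A, Optimal π' ε → π'.BehEq π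

/-- Probability of a finite interaction history (action, sensor value, success
signal per step) in the coupled process. -/
noncomputable def trajProbG : Policy S A → Env S A → List ((A × S) × Bool) → ℝ≥0∞
  | _, _, [] => 1
  | π, ε, (p, g) :: rest =>
      π.out π.init p.1 * ε.out ε.init (p.2, g) *
        trajProbG (π.evolve p.2 p.1) (ε.evolve p.1 (p.2, g)) rest

/-- A finite action-sensor history occurs with positive probability in the
coupled process (marginalising over the unobserved success signals). -/
def PosProb (π : Policy S A) (ε : Env S A) (h : List (A × S)) : Prop :=
  ∃ l : List ((A × S) × Bool), l.map Prod.fst = h ∧ trajProbG π ε l ≠ 0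

/-- The policy evolved along an action-sensor history (inputs are the sensor
values, outputs the actions). -/
def Policy.evolveBy (π : Policy S A) (h : List (A × S)) : Policy S A :=
  Transducer.evolveSeq π (h.map fun p => (p.2, p.1))

/-- Value-laden filtering: the environment evolved along the actions and sensor
values, with every success signal set to ⊥ (no success). -/
def Env.vlEvolveBy (ε : Env S A) (h : List (A × S)) : Env S A :=
  Transducer.evolveSeq ε (h.map fun p => (p.1, (p.2, false)))

end Value

/-- A policy is non-deterministic if at some reachable state its output
distribution gives positive probability to two distinct actions. -/
def Nondeterministic {S A : Type} [Fintype A] (π : Policy S A) : Prop :=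
  ∃ st, π.Reachable st ∧ ∃ a b : A, a ≠ b ∧ π.out st a ≠ 0 ∧ π.out st b ≠ 0

/-!
By Kuhn's theorem a policy `π` is a mixture of deterministic ones: choosing independently, for
every history `h`, an action `f h` distributed as `π`'s output after `h`, the deterministic policy
`ofChoice f` satisfies `𝔼[succProb n (ofChoice f) ε] = succProb n π ε` for every horizon `n`.
Taking suprema, `value π ε ≤ 𝔼[value (ofChoice f) ε]`; as no policy beats the optimal `π`, almost
every `ofChoice f` is optimal as well. If `π` plays `a ≠ b` with positive probability after some
history of positive probability, then with positive probability `f` follows that history and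
plays `a` (resp. `b`) after it, which gives two behaviourally distinct optimal deterministic
policies.
-/

open MeasureTheory ProbabilityTheory

theorem ProbabilityTheory.indepFun_eval_infinitePi {ι α : Type*} {X : ι → Type*}
    [∀ i, MeasurableSpace (X i)] (P : ∀ i, Measure (X i)) [∀ i, IsProbabilityMeasure (P i)]
    {i₀ : ι} {j : α → ι} (hj : i₀ ∉ Set.range j) :
    IndepFun (fun ω => ω i₀) (fun ω a => ω (j a)) (Measure.infinitePi P) := by
  have hindep := (iIndepFun_infinitePi (P := P) (X := fun _ x => x) fun _ => measurable_id).iIndep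
  have h := indep_iSup_of_disjoint (fun i => (measurable_pi_apply i).comap_le) hindep
    (S := {i₀}) (T := Set.range j) (Set.disjoint_singleton_left.mpr hj)
  rw [IndepFun_iff_Indep]
  refine indep_of_indep_of_le h ?_ ?_
  · exact le_iSup₂_of_le i₀ rfl le_rfl
  · rw [MeasurableSpace.pi, MeasurableSpace.comap_iSup]
    refine iSup_le fun a => ?_
    rw [MeasurableSpace.comap_comp]
    exact le_iSup₂_of_le (j a) ⟨a, rfl⟩ le_rfl

theorem measurable_comp_cons {α β : Type*} [MeasurableSpace β] (a : α) :
    Measurable fun f : List α → β => f ∘ List.cons a :=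
  measurable_pi_lambda _ fun h => measurable_pi_apply (a :: h)

namespace Transducer

variable {I O : Type} [Fintype O]

theorem stepSeq_evolve (t : Transducer I O) (i : I) (o : O) (st : t.State) (l : List (I × O)) :
    (t.evolve i o).stepSeq st l = t.stepSeq st l := by
  induction l generalizing st with
  | nil => rfl
  | cons p l ih => exact ih _

theorem stepSeq_append (t : Transducer I O) (st : t.State) (l l' : List (I × O)) :
    t.stepSeq st (l ++ l') = t.stepSeq (t.stepSeq st l) l' := by
  induction l generalizing st with
  | nil => rfl
  | cons p l ih => exact ih _

theorem beh_append_singleton (t : Transducer I O) (l : List (I × O)) (i : I) (o : O) :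
    t.beh (l.map Prod.fst ++ [i]) (l.map Prod.snd ++ [o]) =
      t.beh (l.map Prod.fst) (l.map Prod.snd) * t.out (t.stepSeq t.init l) o := by
  induction l generalizing t with
  | nil => simp [beh, stepSeq]
  | cons p l ih =>
    simp only [List.map_cons, List.cons_append, beh, ih, mul_assoc]
    exact congrArg (fun st => _ * (_ * t.out st o)) (stepSeq_evolve t p.1 p.2 _ l)

theorem exists_beh_ne_zero_of_reachable {t : Transducer I O} {st : t.State}
    (h : t.Reachable st) :
    ∃ l : List (I × O), t.stepSeq t.init l = st ∧ t.beh (l.map Prod.fst) (l.map Prod.snd) ≠ 0 := by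
  induction h with
  | init => exact ⟨[], rfl, by simp [beh]⟩
  | step i o _ hout ih =>
    obtain ⟨l, rfl, hl⟩ := ih
    refine ⟨l ++ [(i, o)], by rw [stepSeq_append]; rfl, ?_⟩
    simpa [beh_append_singleton] using And.intro hl hout

theorem nonempty (t : Transducer I O) : Nonempty O := by
  by_contra h
  rw [not_nonempty_iff] at h
  simpa using t.out_sum t.init

section Choice

variable [DecidableEq O]

/-- The state is the choice function re-rooted at the current history, so that
`(ofChoice f).evolve i o` is `ofChoice (f ∘ List.cons (i, o))` by definition. -/
def ofChoice (f : List (I × O) → O) : Transducer I O where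
  State := List (I × O) → O
  init := f
  out g o := if o = g [] then 1 else 0
  out_sum g := by simp
  step g i o := g ∘ List.cons (i, o)

theorem deterministic_ofChoice (f : List (I × O) → O) : (ofChoice f).Deterministic :=
  fun g _ => ⟨g [], if_pos rfl⟩

theorem ofChoice_out_ne_zero {f g : List (I × O) → O} {o : O} :
    (ofChoice f).out g o ≠ 0 ↔ o = g [] := by
  simp [ofChoice]

theorem eq_of_beh_ofChoice_ne_zero {f : List (I × O) → O} {l : List (I × O)}
    {i : I} {o o' : O} (h : (ofChoice f).beh (l.map Prod.fst ++ [i]) (l.map Prod.snd ++ [o]) ≠ 0)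
    (h' : (ofChoice f).beh (l.map Prod.fst ++ [i]) (l.map Prod.snd ++ [o']) ≠ 0) : o = o' := by
  rw [beh_append_singleton] at h h'
  exact (ofChoice_out_ne_zero.mp (right_ne_zero_of_mul h)).trans
    (ofChoice_out_ne_zero.mp (right_ne_zero_of_mul h')).symm

theorem beh_ofChoice_cons (f : List (I × O) → O) (i : I) (is : List I) (o : O) (os : List O) :
    (ofChoice f).beh (i :: is) (o :: os) =
      (if o = f [] then 1 else 0) * (ofChoice (f ∘ List.cons (i, o))).beh is os := rfl

end Choice

section ChoiceMeasure

variable [MeasurableSpace O]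

noncomputable def outMeasure (t : Transducer I O) (st : t.State) : Measure O :=
  (PMF.ofFintype (t.out st) (t.out_sum st)).toMeasure

instance (t : Transducer I O) (st : t.State) : IsProbabilityMeasure (t.outMeasure st) :=
  PMF.toMeasure.isProbabilityMeasure _

noncomputable def choiceMeasure (t : Transducer I O) : Measure (List (I × O) → O) :=
  Measure.infinitePi fun h => t.outMeasure (t.stepSeq t.init h)

instance (t : Transducer I O) : IsProbabilityMeasure t.choiceMeasure := by
  unfold choiceMeasure; infer_instance

theorem map_comp_cons_choiceMeasure (t : Transducer I O) (i : I) (o : O) :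
    t.choiceMeasure.map (· ∘ List.cons (i, o)) = (t.evolve i o).choiceMeasure := by
  change Measure.map (fun (f : List (I × O) → O) h => f ((i, o) :: h)) (Measure.infinitePi _) = _
  rw [Measure.map_infinitePi_infinitePi_of_inj List.cons_injective, choiceMeasure]
  congr 1
  funext h
  exact congrArg t.outMeasure (stepSeq_evolve t i o _ h).symm

variable [MeasurableSingletonClass O]

theorem choiceMeasure_head_eq (t : Transducer I O) (o : O) :
    t.choiceMeasure {f | f [] = o} = t.out t.init o :=
  calc t.choiceMeasure {f | f [] = o} = (t.choiceMeasure.map fun f => f []) {o} := by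
        rw [Measure.map_apply (measurable_pi_apply _) (measurableSet_singleton o)]; rfl
    _ = t.outMeasure t.init {o} := by
        rw [choiceMeasure, Measure.infinitePi_map_eval]; rfl
    _ = t.out t.init o := by
        rw [outMeasure, PMF.toMeasure_apply_singleton _ _ (measurableSet_singleton o)]; rfl

variable [DecidableEq O]

theorem measurable_ite_head (o : O) :
    Measurable fun f : List (I × O) → O => if o = f [] then (1 : ℝ≥0∞) else 0 :=
  (measurable_of_countable fun x : O => if o = x then (1 : ℝ≥0∞) else 0).comp
    (measurable_pi_apply [])

theorem measurable_ite_head_mul {Φ : (List (I × O) → O) → ℝ≥0∞} (hΦ : Measurable Φ)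
    (i : I) (o : O) :
    Measurable fun f => (if o = f [] then 1 else 0) * Φ (f ∘ List.cons (i, o)) :=
  (measurable_ite_head o).mul (hΦ.comp (measurable_comp_cons (i, o)))

-- The choice at `[]` is independent of the choices below `(i, o)`, which are distributed as
-- for `t.evolve i o`.
theorem lintegral_choiceMeasure_cons (t : Transducer I O) (i : I) (o : O)
    {Φ : (List (I × O) → O) → ℝ≥0∞} (hΦ : Measurable Φ) :
    ∫⁻ f, (if o = f [] then 1 else 0) * Φ (f ∘ List.cons (i, o)) ∂t.choiceMeasure =
      t.out t.init o * ∫⁻ g, Φ g ∂(t.evolve i o).choiceMeasure := by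
  have hindep : IndepFun (fun f => f []) (fun f => f ∘ List.cons (i, o)) t.choiceMeasure :=
    indepFun_eval_infinitePi _ (by simp)
  rw [lintegral_mul_eq_lintegral_mul_lintegral_of_indepFun'' (μ := t.choiceMeasure)
    (f := fun g : List (I × O) → O => if o = g [] then 1 else 0)
    (g := fun g : List (I × O) → O => Φ (g ∘ List.cons (i, o))) (measurable_ite_head o).aemeasurable
    (hΦ.comp (measurable_comp_cons _)).aemeasurable
    (hindep.comp (measurable_of_countable fun x : O => if o = x then (1 : ℝ≥0∞) else 0) hΦ),
    ← map_comp_cons_choiceMeasure, lintegral_map hΦ (measurable_comp_cons _)]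
  congr 1
  have hset : MeasurableSet {f : List (I × O) → O | f [] = o} :=
    (measurableSet_singleton o).preimage (measurable_pi_apply [])
  rw [← choiceMeasure_head_eq, ← lintegral_indicator_one hset]
  simp only [Set.indicator, Set.mem_ofPred_eq, Pi.one_apply, eq_comm]

theorem measurable_beh_ofChoice (is : List I) (os : List O) :
    Measurable fun f : List (I × O) → O => (ofChoice f).beh is os := by
  induction is generalizing os with
  | nil => cases os <;> exact measurable_const
  | cons i is ih =>
    cases os with
    | nil => exact measurable_const
    | cons o os =>
      simp only [beh_ofChoice_cons]
      exact measurable_ite_head_mul (ih os) i o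

theorem lintegral_beh_ofChoice (t : Transducer I O) (is : List I) (os : List O) :
    ∫⁻ f, (ofChoice f).beh is os ∂t.choiceMeasure = t.beh is os := by
  induction is generalizing t os with
  | nil => cases os <;> simp [beh]
  | cons i is ih =>
    cases os with
    | nil => simp [beh]
    | cons o os =>
      simp only [beh_ofChoice_cons]
      rw [lintegral_choiceMeasure_cons t i o (measurable_beh_ofChoice is os), ih]
      rfl

end ChoiceMeasure

end Transducer

open Transducer

section Value

variable {S A : Type} [Fintype S] [Fintype A]

theorem succProb_le_one (n : ℕ) (π : Policy S A) (ε : Env S A) : succProb n π ε ≤ 1 := by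
  induction n generalizing π ε with
  | zero => simp [succProb]
  | succ n ih =>
    calc succProb (n + 1) π ε ≤ ∑ a, ∑ p, π.out π.init a * ε.out ε.init p * 1 := by
          unfold succProb
          gcongr with a _ p _
          split_ifs
          exacts [le_rfl, ih _ _]
      _ = 1 := by simp [← Finset.mul_sum, π.out_sum, ε.out_sum]

theorem value_le_one (π : Policy S A) (ε : Env S A) : value π ε ≤ 1 :=
  iSup_le fun n => succProb_le_one n π ε

variable [DecidableEq A]

theorem succProb_ofChoice_succ (n : ℕ) (f : List (S × A) → A) (ε : Env S A) :
    succProb (n + 1) (ofChoice f) ε = ∑ a, ∑ p, (if a = f [] then 1 else 0) * (ε.out ε.init p *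
      (if p.2 then 1 else succProb n (ofChoice (f ∘ List.cons (p.1, a))) (ε.evolve a p))) := by
  simp only [succProb, mul_assoc]
  rfl

variable [MeasurableSpace A] [MeasurableSingletonClass A]

theorem measurable_succProb_ofChoice (n : ℕ) (ε : Env S A) :
    Measurable fun f : List (S × A) → A => succProb n (ofChoice f) ε := by
  induction n generalizing ε with
  | zero => exact measurable_const
  | succ n ih =>
    simp only [succProb_ofChoice_succ]
    refine Finset.measurable_sum _ fun a _ => Finset.measurable_sum _ fun p _ => ?_
    refine measurable_ite_head_mul (Φ := fun g => ε.out ε.init p *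
      (if p.2 then 1 else succProb n (ofChoice g) (ε.evolve a p))) ?_ p.1 a
    exact measurable_const.mul (by split_ifs; exacts [measurable_const, ih _])

theorem lintegral_succProb_ofChoice (n : ℕ) (π : Policy S A) (ε : Env S A) :
    ∫⁻ f, succProb n (ofChoice f) ε ∂π.choiceMeasure = succProb n π ε := by
  induction n generalizing π ε with
  | zero => simp [succProb]
  | succ n ih =>
    have hite : ∀ a p, Measurable fun g : List (S × A) → A =>
        (if p.2 then 1 else succProb n (ofChoice g) (ε.evolve a p)) := fun a p => by
      split_ifs
      exacts [measurable_const, measurable_succProb_ofChoice n _]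
    have hΦ : ∀ a p, Measurable fun g : List (S × A) → A =>
        ε.out ε.init p * (if p.2 then 1 else succProb n (ofChoice g) (ε.evolve a p)) :=
      fun a p => (hite a p).const_mul _
    simp only [succProb_ofChoice_succ]
    rw [lintegral_finsetSum _ fun a _ => Finset.measurable_sum _ fun p _ =>
      measurable_ite_head_mul (hΦ a p) p.1 a]
    refine Finset.sum_congr rfl fun a _ => ?_
    rw [lintegral_finsetSum _ fun p _ => measurable_ite_head_mul (hΦ a p) p.1 a]
    refine Finset.sum_congr rfl fun p _ => ?_
    rw [lintegral_choiceMeasure_cons π p.1 a (hΦ a p), lintegral_const_mul _ (hite a p), mul_assoc]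
    split_ifs
    · simp
    · rw [ih]

end Value

theorem exists_optimal_ofChoice_beh_ne_zero {S A : Type} [Fintype S] [Fintype A] [DecidableEq A]
    {π : Policy S A} {ε : Env S A} (hopt : Optimal π ε) {is : List S} {os : List A}
    (h : π.beh is os ≠ 0) : ∃ f, Optimal (ofChoice f) ε ∧ (ofChoice f).beh is os ≠ 0 := by
  let _ : MeasurableSpace A := ⊤
  have hconst : ∫⁻ _, value π ε ∂π.choiceMeasure = value π ε := by simp
  have hae : ∀ᵐ f ∂π.choiceMeasure, value (ofChoice f) ε = value π ε := by
    refine ae_eq_of_ae_le_of_lintegral_le (ae_of_all _ fun f => hopt _) ?_ aemeasurable_const ?_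
    · refine ne_top_of_le_ne_top ?_ (lintegral_mono fun f => hopt (ofChoice f))
      rw [hconst]
      exact ((value_le_one π ε).trans_lt ENNReal.one_lt_top).ne
    · rw [hconst]
      refine iSup_le fun n => ?_
      rw [← lintegral_succProb_ofChoice]
      exact lintegral_mono fun f => le_iSup (fun n => succProb n (ofChoice f) ε) n
  have hpos : ∃ᵐ f ∂π.choiceMeasure, (ofChoice f).beh is os ≠ 0 := by
    refine fun hzero => h ?_
    rw [← lintegral_beh_ofChoice, lintegral_congr_ae (hzero.mono fun f hf => not_not.mp hf),
      lintegral_zero]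
  obtain ⟨f, hbeh, hval⟩ := (hpos.and_eventually hae).exists
  exact ⟨f, fun π' => (hopt π').trans hval.ge, hbeh⟩

/-- **Non-deterministic optimal policies are never uniquely optimal.** If a
non-deterministic policy `π` is optimal for a teleo-environment `ε`, then there
exist two behaviourally distinct deterministic policies that are also optimal
for `ε`; in particular `π` is not uniquely optimal for `ε`. -/
theorem nondeterministic_not_uniquely_optimal
    {S A : Type} [Fintype S] [Fintype A]
    (π : Policy S A) (ε : Env S A)
    (hnd : Nondeterministic π) (hopt : Optimal π ε) :
    (∃ π₁ π₂ : Policy S A, π₁.Deterministic ∧ π₂.Deterministic ∧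
      ¬ π₁.BehEq π₂ ∧ Optimal π₁ ε ∧ Optimal π₂ ε) ∧
    ¬ UniquelyOptimal π ε := by
  classical
  obtain ⟨st, hst, a, b, hab, ha, hb⟩ := hnd
  obtain ⟨⟨s, -⟩⟩ := ε.nonempty
  obtain ⟨l, rfl, hl⟩ := exists_beh_ne_zero_of_reachable hst
  have hext : ∀ x, π.out (π.stepSeq π.init l) x ≠ 0 →
      π.beh (l.map Prod.fst ++ [s]) (l.map Prod.snd ++ [x]) ≠ 0 := fun x hx => by
    rw [beh_append_singleton]
    exact mul_ne_zero hl hx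
  obtain ⟨f, hf, hfa⟩ := exists_optimal_ofChoice_beh_ne_zero hopt (hext a ha)
  obtain ⟨g, hg, hgb⟩ := exists_optimal_ofChoice_beh_ne_zero hopt (hext b hb)
  have hfg : ¬ (ofChoice f).BehEq (ofChoice g) := fun h =>
    hab (eq_of_beh_ofChoice_ne_zero (h _ _ ▸ hfa) hgb)
  refine ⟨⟨_, _, deterministic_ofChoice f, deterministic_ofChoice g, hfg, hf, hg⟩, ?_⟩
  rintro ⟨-, huniq⟩
  exact hfg fun is os => by rw [huniq _ hf, huniq _ hg]
end

section
/- The value of a policy π in a teleo-environment ε satisfies the Bellman-style recursion: value(π, ε) equals the probability of success this step (π outputs a, ε outputs (s, g) given a, with g = ⊤) plus the probability of no success this step times the expected value, conditioned on no success, of the evolved pair (π evolved by (s,a), ε evolved by (a,(s,⊥))). -/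
open scoped ENNReal BigOperators

lemma succProb_mono {S A : Type} [Fintype S] [Fintype A] :
    ∀ n, ∀ (π : Policy S A) (ε : Env S A),
      succProb n π ε ≤ succProb (n + 1) π ε := by
  intro n
  induction n with
  | zero => intro π ε; simp [succProb]
  | succ n ih =>
      intro π ε
      simp only [succProb]
      refine Finset.sum_le_sum fun a _ => Finset.sum_le_sum fun p _ => ?_
      gcongr
      split
      · exact le_rfl
      · exact ih _ _

lemma succProb_monotone {S A : Type} [Fintype S] [Fintype A]
    (π : Policy S A) (ε : Env S A) : Monotone fun n => succProb n π ε :=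
  monotone_nat_of_le_succ fun n => succProb_mono n π ε

/-- **Bellman-style recursion for the value.** The value of a policy `π` in a
teleo-environment `ε` equals the probability of success this step plus the
probability of no success this step times the value of the evolved pair,
conditioned on no success: for each action `a` and emitted pair `p = (s, g)`,
if `g = ⊤` the contribution is 1, otherwise it is the value of `π` evolved by
`(s, a)` in `ε` evolved by `(a, (s, ⊥))`. -/
theorem value_bellman_recursion
    {S A : Type} [Fintype S] [Fintype A] (π : Policy S A) (ε : Env S A) :
    value π ε =
      ∑ a : A, ∑ p : S × Bool,
        π.out π.init a * ε.out ε.init p *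
          (if p.2 then 1 else value (π.evolve p.1 a) (ε.evolve a p)) := by
  have h1 : value π ε = ⨆ n, succProb (n + 1) π ε := by
    refine le_antisymm (iSup_le fun n => ?_) (iSup_le fun n => le_iSup (fun n => succProb n π ε) (n + 1))
    exact le_trans (succProb_mono n π ε) (le_iSup (fun n => succProb (n + 1) π ε) n)
  rw [h1]
  simp only [succProb, value]
  rw [← ENNReal.finsetSum_iSup_of_monotone (fun a n m hnm => Finset.sum_le_sum fun p _ => ?_)]
  swap
  · gcongr
    split
    · exact le_rfl
    · exact succProb_monotone _ _ hnm
  refine Finset.sum_congr rfl fun a _ => ?_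
  rw [← ENNReal.finsetSum_iSup_of_monotone (fun p n m hnm => ?_)]
  swap
  · gcongr
    split
    · exact le_rfl
    · exact succProb_monotone _ _ hnm
  refine Finset.sum_congr rfl fun p _ => ?_
  obtain ⟨s, g⟩ := p
  cases g
  · simp only [if_neg Bool.false_ne_true]
    rw [ENNReal.mul_iSup]
  · simp only [if_true, mul_one, iSup_const]
end
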